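/- Let X : [0,S] × [0,T] → ℝ² be a C³ map with ‖∂_s X(s,t)‖ = 1 for all (s,t), define T = ∂_s X, N = R T, κ = ⟨∂_s T, N⟩, V = ⟨∂_t X, N⟩, v = ⟨∂_t X, T⟩, and assume the curvature flow equation V = κ holds everywhere. Let ψ : ℝ² → ℝ be C², let r : [0,T] → (0,S) be differentiable, and suppose that for all t: ψ(X(r(t),t)) = 0, ⟨∇ψ(X(r(t),t)), N(r(t),t)⟩ = 0, and ⟨∇ψ(X(r(t),t)), T(r(t),t)⟩ ≠ 0. Define h(t) = −⟨D²ψ(X(r(t),t)) N(r(t),t), N(r(t),t)⟩ / ⟨∇ψ(X(r(t),t)), T(r(t),t)⟩. Then ∂_s κ(r(t),t) + h(t) κ(r(t),t) = 0 for all t. -/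

import Mathlib

/-!
Differentiating `ψ (X (r t) t) = 0` shows that the contact point moves with velocity `V N`: its
tangential velocity `r' + v` is killed because `⟨∇ψ, N⟩ = 0` and `⟨∇ψ, T⟩ ≠ 0`. Differentiating
`⟨∇ψ, N⟩ = 0` along the contact point then gives `V ⟨D²ψ N, N⟩ - ∂ₛV ⟨∇ψ, T⟩ = 0`, using
`∂ₜT = ∂ₛ∂ₜX` and `∂ₛT ⊥ T`. So `∂ₛV + h V = 0` for every unit-speed motion meeting the boundary
perpendicularly, and the flow equation `V = κ`, valid on a neighbourhood of the contact point,
turns this into the claim.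
-/

/-- The anticlockwise rotation of `ℝ²` by `π/2`. -/
def rot2 (u : ℝ × ℝ) : ℝ × ℝ := (-u.2, u.1)

/-- The Euclidean inner product on `ℝ²`. -/
def dot2 (u w : ℝ × ℝ) : ℝ := u.1 * w.1 + u.2 * w.2

open Set Filter Topology

section Calculus

variable {E : Type*} [NormedAddCommGroup E] [NormedSpace ℝ E]

theorem HasDerivAt.eq_zero_of_eqOn_Icc {f : ℝ → E} {f' : E} {a b t : ℝ} (hab : a < b)
    (ht : t ∈ Icc a b) (hf : HasDerivAt f f' t) (h0 : ∀ τ ∈ Icc a b, f τ = 0) : f' = 0 :=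
  (uniqueDiffOn_Icc hab t ht).eq_deriv _ hf.hasDerivWithinAt
    ((hasDerivWithinAt_const t _ 0).congr h0 (h0 t ht))

theorem fderiv_clm_apply_const {F G : Type*} [NormedAddCommGroup F] [NormedSpace ℝ F]
    [NormedAddCommGroup G] [NormedSpace ℝ G] {c : E → F →L[ℝ] G} {x : E}
    (hc : DifferentiableAt ℝ c x) (u : F) (w : E) :
    fderiv ℝ (fun y => c y u) x w = fderiv ℝ c x w u := by
  simp [fderiv_clm_apply hc (differentiableAt_const u)]

noncomputable def partialS (G : ℝ × ℝ → E) (q : ℝ × ℝ) : E := fderiv ℝ G q (1, 0)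

noncomputable def partialT (G : ℝ × ℝ → E) (q : ℝ × ℝ) : E := fderiv ℝ G q (0, 1)

theorem DifferentiableAt.hasDerivAt_partialS {G : ℝ × ℝ → E} {s t : ℝ}
    (hG : DifferentiableAt ℝ G (s, t)) : HasDerivAt (fun σ => G (σ, t)) (partialS G (s, t)) s :=
  hG.hasFDerivAt.comp_hasDerivAt s ((hasDerivAt_id s).prodMk (hasDerivAt_const s t))

theorem DifferentiableAt.hasDerivAt_partialT {G : ℝ × ℝ → E} {s t : ℝ}
    (hG : DifferentiableAt ℝ G (s, t)) : HasDerivAt (fun τ => G (s, τ)) (partialT G (s, t)) t :=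
  hG.hasFDerivAt.comp_hasDerivAt t ((hasDerivAt_const t s).prodMk (hasDerivAt_id t))

theorem hasDerivAt_comp_graph {G : ℝ × ℝ → E} {r : ℝ → ℝ} {r' t : ℝ}
    (hG : DifferentiableAt ℝ G (r t, t)) (hr : HasDerivAt r r' t) :
    HasDerivAt (fun τ => G (r τ, τ)) (r' • partialS G (r t, t) + partialT G (r t, t)) t := by
  have h := hG.hasFDerivAt.comp_hasDerivAt (f := fun τ => (r τ, τ)) t (hr.prodMk (hasDerivAt_id t))
  have hsplit : ((r', 1) : ℝ × ℝ) = r' • ((1 : ℝ), (0 : ℝ)) + ((0 : ℝ), (1 : ℝ)) := by simp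
  rwa [hsplit, map_add, map_smul] at h

theorem partialT_partialS {G : ℝ × ℝ → E} {q : ℝ × ℝ} (hG : ContDiffAt ℝ 2 G q) :
    partialT (partialS G) q = partialS (partialT G) q := by
  have hD : DifferentiableAt ℝ (fderiv ℝ G) q :=
    (hG.fderiv_right le_rfl).differentiableAt one_ne_zero
  change fderiv ℝ (fun y => fderiv ℝ G y (1, 0)) q (0, 1)
    = fderiv ℝ (fun y => fderiv ℝ G y (0, 1)) q (1, 0)
  rw [fderiv_clm_apply_const hD, fderiv_clm_apply_const hD]
  exact hG.isSymmSndFDerivAt (by simp) _ _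

end Calculus

theorem hasDerivAt_dot2 {u w : ℝ → ℝ × ℝ} {u' w' : ℝ × ℝ} {t : ℝ}
    (hu : HasDerivAt u u' t) (hw : HasDerivAt w w' t) :
    HasDerivAt (fun t => dot2 (u t) (w t)) (dot2 u' (w t) + dot2 (u t) w') t := by
  have hfst {v : ℝ → ℝ × ℝ} {v' : ℝ × ℝ} (hv : HasDerivAt v v' t) :
      HasDerivAt (fun t => (v t).1) v'.1 t :=
    (hasFDerivAt_fst (p := v t)).comp_hasDerivAt t hv
  have hsnd {v : ℝ → ℝ × ℝ} {v' : ℝ × ℝ} (hv : HasDerivAt v v' t) :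
      HasDerivAt (fun t => (v t).2) v'.2 t :=
    (hasFDerivAt_snd (p := v t)).comp_hasDerivAt t hv
  refine (((hfst hu).mul (hfst hw)).add ((hsnd hu).mul (hsnd hw))).congr_deriv ?_
  simp only [dot2]
  ring

theorem hasDerivAt_rot2 {u : ℝ → ℝ × ℝ} {u' : ℝ × ℝ} {t : ℝ} (hu : HasDerivAt u u' t) :
    HasDerivAt (fun t => rot2 (u t)) (rot2 u') t :=
  (hasFDerivAt_snd.comp_hasDerivAt t hu).neg.prodMk (hasFDerivAt_fst.comp_hasDerivAt t hu)

theorem eq_dot2_smul_add_dot2_rot2_smul {u : ℝ × ℝ} (hu : dot2 u u = 1) (w : ℝ × ℝ) :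
    w = dot2 w u • u + dot2 w (rot2 u) • rot2 u := by
  simp only [dot2, rot2] at *
  ext
  · simp only [Prod.fst_add, Prod.smul_fst, smul_eq_mul]
    linear_combination (-w.1) * hu
  · simp only [Prod.snd_add, Prod.smul_snd, smul_eq_mul]
    linear_combination (-w.2) * hu

theorem ContinuousLinearMap.apply_eq_dot2_smul {E : Type*} [AddCommGroup E] [Module ℝ E]
    [TopologicalSpace E] (L : ℝ × ℝ →L[ℝ] E) {u : ℝ × ℝ} (hu : dot2 u u = 1)
    (hL : L (rot2 u) = 0) (w : ℝ × ℝ) : L w = dot2 w u • L u := by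
  conv_lhs => rw [eq_dot2_smul_add_dot2_rot2_smul hu w]
  rw [map_add, map_smul, map_smul, hL, smul_zero, add_zero]

theorem HasDerivAt.dot2_self_eq_zero {u : ℝ → ℝ × ℝ} {u' : ℝ × ℝ} {s : ℝ}
    (hu : HasDerivAt u u' s) (hunit : ∀ᶠ σ in 𝓝 s, dot2 (u σ) (u σ) = 1) :
    dot2 u' (u s) = 0 := by
  have h := (hasDerivAt_dot2 hu hu).unique ((hasDerivAt_const s 1).congr_of_eventuallyEq hunit)
  simp only [dot2] at h ⊢
  linarith

theorem add_eq_dot2_rot2_smul_rot2_of_map_eq_zero (L : ℝ × ℝ →L[ℝ] ℝ) {u w : ℝ × ℝ} {c : ℝ}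
    (hu : dot2 u u = 1) (hL : L (rot2 u) = 0) (hLu : L u ≠ 0) (h : L (c • u + w) = 0) :
    c • u + w = dot2 w (rot2 u) • rot2 u := by
  rw [L.apply_eq_dot2_smul hu hL, smul_eq_mul, mul_eq_zero, or_iff_left hLu] at h
  conv_lhs => rw [eq_dot2_smul_add_dot2_rot2_smul hu (c • u + w), h, zero_smul, zero_add]
  congr 1
  simp only [dot2, rot2, Prod.fst_add, Prod.snd_add, Prod.smul_fst, Prod.smul_snd, smul_eq_mul]
  ring

theorem dot2_rot2_add_eq_div_mul_of_contact (L : ℝ × ℝ →L[ℝ] ℝ)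
    (B : ℝ × ℝ →L[ℝ] ℝ × ℝ →L[ℝ] ℝ) {T₀ Tₛ Xₜ Xₛₜ : ℝ × ℝ} {r' : ℝ}
    (hT₀ : dot2 T₀ T₀ = 1) (hTₛ : dot2 Tₛ T₀ = 0) (hLN : L (rot2 T₀) = 0) (hLT : L T₀ ≠ 0)
    (hon : L (r' • T₀ + Xₜ) = 0)
    (hperp : B (r' • T₀ + Xₜ) (rot2 T₀) + L (rot2 (r' • Tₛ + Xₛₜ)) = 0) :
    dot2 Xₛₜ (rot2 T₀) + dot2 Xₜ (rot2 Tₛ)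
      = B (rot2 T₀) (rot2 T₀) / L T₀ * dot2 Xₜ (rot2 T₀) := by
  have hvel := add_eq_dot2_rot2_smul_rot2_of_map_eq_zero L hT₀ hLN hLT hon
  rw [hvel, map_smul, smul_apply, L.apply_eq_dot2_smul hT₀ hLN,
    smul_eq_mul, smul_eq_mul] at hperp
  have hr' : r' = -dot2 Xₜ T₀ := by
    have h := congrArg (dot2 · T₀) hvel
    simp only [dot2, rot2, Prod.fst_add, Prod.snd_add, Prod.smul_fst, Prod.smul_snd,
      smul_eq_mul] at h hT₀ ⊢
    linear_combination h - r' * hT₀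
  rw [div_mul_eq_mul_div, eq_div_iff hLT]
  subst hr'
  obtain ⟨p, q⟩ := T₀
  obtain ⟨a, b⟩ := Tₛ
  obtain ⟨f₁, f₂⟩ := Xₜ
  obtain ⟨g₁, g₂⟩ := Xₛₜ
  simp only [dot2, rot2, Prod.fst_add, Prod.snd_add, Prod.smul_fst, Prod.smul_snd,
    smul_eq_mul] at hperp hT₀ hTₛ ⊢
  -- `hT₀` and `hTₛ` make `Tₛ` a multiple of `rot2 T₀`, so `⟨Xₜ, R Tₛ⟩ = r' ⟨Tₛ, R T₀⟩`.
  linear_combination -hperp + L (p, q) * ((f₁ * b - f₂ * a) * hT₀ + (f₂ * p - f₁ * q) * hTₛ)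

noncomputable def normalVelocity (F : ℝ × ℝ → ℝ × ℝ) (q : ℝ × ℝ) : ℝ :=
  dot2 (partialT F q) (rot2 (partialS F q))

theorem hasDerivAt_normalVelocity_of_perpendicular_contact {F : ℝ × ℝ → ℝ × ℝ}
    (hF : ContDiff ℝ 2 F) {ψ : ℝ × ℝ → ℝ} (hψ : ContDiff ℝ 2 ψ) {r : ℝ → ℝ} {r' a b t : ℝ}
    (hab : a < b) (ht : t ∈ Icc a b) (hr : HasDerivAt r r' t)
    (hunit : ∀ᶠ s in 𝓝 (r t), dot2 (partialS F (s, t)) (partialS F (s, t)) = 1)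
    (hon : ∀ τ ∈ Icc a b, ψ (F (r τ, τ)) = 0)
    (hperp : ∀ τ ∈ Icc a b, fderiv ℝ ψ (F (r τ, τ)) (rot2 (partialS F (r τ, τ))) = 0)
    (hnond : fderiv ℝ ψ (F (r t, t)) (partialS F (r t, t)) ≠ 0) :
    HasDerivAt (fun s => normalVelocity F (s, t))
      (fderiv ℝ (fderiv ℝ ψ) (F (r t, t)) (rot2 (partialS F (r t, t)))
          (rot2 (partialS F (r t, t))) / fderiv ℝ ψ (F (r t, t)) (partialS F (r t, t))
        * normalVelocity F (r t, t)) (r t) := by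
  have hF' : ContDiff ℝ 1 (fderiv ℝ F) := hF.fderiv_right (by norm_num)
  have hFs : Differentiable ℝ (partialS F) :=
    (hF'.clm_apply contDiff_const).differentiable one_ne_zero
  have hFt : Differentiable ℝ (partialT F) :=
    (hF'.clm_apply contDiff_const).differentiable one_ne_zero
  have hψ' : Differentiable ℝ (fderiv ℝ ψ) :=
    (hψ.fderiv_right (by norm_num)).differentiable one_ne_zero
  have hc := hasDerivAt_comp_graph (hF.differentiable two_ne_zero _) hr
  have hTc := hasDerivAt_comp_graph (hFs _) hr
  have hon' := ((hψ.differentiable two_ne_zero _).hasFDerivAt.comp_hasDerivAt t hc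
    ).eq_zero_of_eqOn_Icc hab ht hon
  have hperp' := (((hψ' _).hasFDerivAt.comp_hasDerivAt t hc).clm_apply
    (hasDerivAt_rot2 hTc)).eq_zero_of_eqOn_Icc hab ht hperp
  rw [partialT_partialS hF.contDiffAt] at hperp'
  have hTs := (hFs _).hasDerivAt_partialS.dot2_self_eq_zero hunit
  refine (hasDerivAt_dot2 (hFt _).hasDerivAt_partialS
    (hasDerivAt_rot2 (hFs _).hasDerivAt_partialS)).congr_deriv ?_
  exact dot2_rot2_add_eq_div_mul_of_contact _ _ hunit.self_of_nhds hTs (hperp t ht) hnond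
    hon' hperp'

theorem stmt13_general (S T : ℝ) (hT : 0 < T)
    (X : ℝ → ℝ → ℝ × ℝ)
    (hX : ContDiff ℝ 3 (fun q : ℝ × ℝ => X q.1 q.2))
    (Tg Nv : ℝ → ℝ → ℝ × ℝ) (κ V : ℝ → ℝ → ℝ)
    (hTg : ∀ s t, Tg s t = deriv (fun σ => X σ t) s)
    -- ‖∂ₛX‖ = 1 (arc-length parameterization)
    (hunit : ∀ s ∈ Set.Icc (0 : ℝ) S, ∀ t ∈ Set.Icc (0 : ℝ) T, dot2 (Tg s t) (Tg s t) = 1)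
    (hNv : ∀ s t, Nv s t = rot2 (Tg s t))
    (hV : ∀ s t, V s t = dot2 (deriv (fun τ => X s τ) t) (Nv s t))
    -- the curvature flow equation V = κ
    (hflow : ∀ s ∈ Set.Icc (0 : ℝ) S, ∀ t ∈ Set.Icc (0 : ℝ) T, V s t = κ s t)
    (ψ : ℝ × ℝ → ℝ) (hψ : ContDiff ℝ 2 ψ)
    (r r' : ℝ → ℝ)
    (hr : ∀ t ∈ Set.Icc (0 : ℝ) T, HasDerivAt r (r' t) t)
    (hrange : ∀ t ∈ Set.Icc (0 : ℝ) T, r t ∈ Set.Ioo 0 S)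
    -- the endpoint lies on {ψ = 0}
    (hon : ∀ t ∈ Set.Icc (0 : ℝ) T, ψ (X (r t) t) = 0)
    -- ⟨∇ψ, N⟩ = 0 and ⟨∇ψ, T⟩ ≠ 0 at the endpoint
    (hperp : ∀ t ∈ Set.Icc (0 : ℝ) T, fderiv ℝ ψ (X (r t) t) (Nv (r t) t) = 0)
    (hnond : ∀ t ∈ Set.Icc (0 : ℝ) T, fderiv ℝ ψ (X (r t) t) (Tg (r t) t) ≠ 0)
    -- h(t) = −⟨D²ψ N, N⟩ / ⟨∇ψ, T⟩ at the contact point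
    (h : ℝ → ℝ)
    (hdef : ∀ t ∈ Set.Icc (0 : ℝ) T,
      h t = -(fderiv ℝ (fun y => fderiv ℝ ψ y (Nv (r t) t)) (X (r t) t) (Nv (r t) t))
              / fderiv ℝ ψ (X (r t) t) (Tg (r t) t)) :
    ∀ t ∈ Set.Icc (0 : ℝ) T,
      deriv (fun σ => κ σ t) (r t) + h t * κ (r t) t = 0 := by
  intro t ht
  set F : ℝ × ℝ → ℝ × ℝ := fun q => X q.1 q.2
  have hF : ContDiff ℝ 2 F := hX.of_le (by norm_num)
  have hTgF : ∀ s t, Tg s t = partialS F (s, t) := fun s t => by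
    rw [hTg]; exact (hF.differentiable two_ne_zero _).hasDerivAt_partialS.deriv
  have hκF : ∀ s ∈ Icc 0 S, κ s t = normalVelocity F (s, t) := fun s hs => by
    rw [← hflow s hs t ht, hV, hNv, hTgF,
      (hF.differentiable two_ne_zero _).hasDerivAt_partialT.deriv, normalVelocity]
  have hnhds : Icc 0 S ∈ 𝓝 (r t) := Icc_mem_nhds (hrange t ht).1 (hrange t ht).2
  have hκ_eq : (fun σ => κ σ t) =ᶠ[𝓝 (r t)] fun s => normalVelocity F (s, t) :=
    eventually_of_mem hnhds hκF
  have hV' := hasDerivAt_normalVelocity_of_perpendicular_contact hF hψ hT ht (hr t ht)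
    (eventually_of_mem hnhds fun s hs => hTgF s t ▸ hunit s hs t ht) hon
    (fun τ hτ => by simpa only [hNv, hTgF] using hperp τ hτ) (hTgF _ t ▸ hnond t ht)
  have hψ' : DifferentiableAt ℝ (fderiv ℝ ψ) (F (r t, t)) :=
    (hψ.fderiv_right (by norm_num)).differentiable one_ne_zero _
  rw [hκ_eq.deriv_eq, hV'.deriv, hdef t ht, fderiv_clm_apply_const hψ', hNv, hTgF,
    hκF _ (Ioo_subset_Icc_self (hrange t ht))]
  ring

theorem stmt13 (S T : ℝ) (hS : 0 < S) (hT : 0 < T)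
    (X : ℝ → ℝ → ℝ × ℝ)
    (hX : ContDiff ℝ 3 (fun q : ℝ × ℝ => X q.1 q.2))
    (Tg Nv : ℝ → ℝ → ℝ × ℝ) (κ V v : ℝ → ℝ → ℝ)
    (hTg : ∀ s t, Tg s t = deriv (fun σ => X σ t) s)
    -- ‖∂ₛX‖ = 1 (arc-length parameterization)
    (hunit : ∀ s ∈ Set.Icc (0 : ℝ) S, ∀ t ∈ Set.Icc (0 : ℝ) T, dot2 (Tg s t) (Tg s t) = 1)
    (hNv : ∀ s t, Nv s t = rot2 (Tg s t))
    (hκ : ∀ s t, κ s t = dot2 (deriv (fun σ => Tg σ t) s) (Nv s t))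
    (hV : ∀ s t, V s t = dot2 (deriv (fun τ => X s τ) t) (Nv s t))
    (hv : ∀ s t, v s t = dot2 (deriv (fun τ => X s τ) t) (Tg s t))
    -- the curvature flow equation V = κ
    (hflow : ∀ s ∈ Set.Icc (0 : ℝ) S, ∀ t ∈ Set.Icc (0 : ℝ) T, V s t = κ s t)
    (ψ : ℝ × ℝ → ℝ) (hψ : ContDiff ℝ 2 ψ)
    (r r' : ℝ → ℝ)
    (hr : ∀ t ∈ Set.Icc (0 : ℝ) T, HasDerivAt r (r' t) t)
    (hrange : ∀ t ∈ Set.Icc (0 : ℝ) T, r t ∈ Set.Ioo 0 S)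
    -- the endpoint lies on {ψ = 0}
    (hon : ∀ t ∈ Set.Icc (0 : ℝ) T, ψ (X (r t) t) = 0)
    -- ⟨∇ψ, N⟩ = 0 and ⟨∇ψ, T⟩ ≠ 0 at the endpoint
    (hperp : ∀ t ∈ Set.Icc (0 : ℝ) T, fderiv ℝ ψ (X (r t) t) (Nv (r t) t) = 0)
    (hnond : ∀ t ∈ Set.Icc (0 : ℝ) T, fderiv ℝ ψ (X (r t) t) (Tg (r t) t) ≠ 0)
    -- h(t) = −⟨D²ψ N, N⟩ / ⟨∇ψ, T⟩ at the contact point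
    (h : ℝ → ℝ)
    (hdef : ∀ t ∈ Set.Icc (0 : ℝ) T,
      h t = -(fderiv ℝ (fun y => fderiv ℝ ψ y (Nv (r t) t)) (X (r t) t) (Nv (r t) t))
              / fderiv ℝ ψ (X (r t) t) (Tg (r t) t)) :
    ∀ t ∈ Set.Icc (0 : ℝ) T,
      deriv (fun σ => κ σ t) (r t) + h t * κ (r t) t = 0 :=
  stmt13_general S T hT X hX Tg Nv κ V hTg hunit hNv hV hflow ψ hψ r r' hr hrange hon hperp hnond h
    hdef
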